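/- Σ_{n ≤ x} Σ_{j=1}^n log (j,n)_b = −(ζ'(2b)/(2ζ(2b))) x² + O(x) as x → ∞, where b ≥ 2 is a fixed integer. -/

import Mathlib

/-!
The divisors of `g = (j,n)_b` are exactly the `m` with `m ^ b ∣ j` and `m ^ b ∣ n`, so
`log g = ∑_{m ^ b ∣ j, m ^ b ∣ n} Λ(m)`. Exchanging sums, the pairs `j ≤ n ≤ x` divisible by
`q = m ^ b` are `(q k, q l)` with `k ≤ l ≤ x / q`, so the double sum is `∑_m Λ(m) T(⌊x / m ^ b⌋)`
with `T(K) = K (K + 1) / 2`. As `T(⌊y⌋) = y ^ 2 / 2 + O(y)`, this is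
`x ^ 2 / 2 ∑_m Λ(m) / m ^ (2b) + O(x ∑_m Λ(m) / m ^ b)`, and `∑_m Λ(m) / m ^ s = -ζ'(s) / ζ(s)`.
-/

noncomputable def ggcd (b r s : ℕ) : ℕ := sSup {d : ℕ | 0 < d ∧ d ^ b ∣ r ∧ d ^ b ∣ s}

open ArithmeticFunction Finset

section

variable {b j n : ℕ}

lemma bddAbove_ggcd_set (hb : b ≠ 0) (hj : j ≠ 0) :
    BddAbove {d : ℕ | 0 < d ∧ d ^ b ∣ j ∧ d ^ b ∣ n} :=
  ⟨j, fun d ⟨_, hdj, _⟩ => (Nat.le_self_pow hb d).trans (Nat.le_of_dvd (by omega) hdj)⟩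

lemma ggcd_spec (hb : b ≠ 0) (hj : j ≠ 0) :
    0 < ggcd b j n ∧ ggcd b j n ^ b ∣ j ∧ ggcd b j n ^ b ∣ n :=
  Nat.sSup_mem ⟨1, by simp⟩ (bddAbove_ggcd_set hb hj)

lemma dvd_ggcd_iff (hb : b ≠ 0) (hj : j ≠ 0) {m : ℕ} :
    m ∣ ggcd b j n ↔ m ^ b ∣ j ∧ m ^ b ∣ n := by
  obtain ⟨hg, hgj, hgn⟩ := ggcd_spec (n := n) hb hj
  refine ⟨fun h => ⟨(pow_dvd_pow_of_dvd h b).trans hgj, (pow_dvd_pow_of_dvd h b).trans hgn⟩,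
    fun ⟨hmj, hmn⟩ => ?_⟩
  rcases eq_or_ne m 0 with rfl | hm
  · simp [zero_pow hb, hj] at hmj
  -- `lcm m g` is admissible, so it is at most `g`, hence equal to `g`.
  have hl : 0 < Nat.lcm m (ggcd b j n) := Nat.lcm_pos (Nat.pos_of_ne_zero hm) hg
  have hle : Nat.lcm m (ggcd b j n) ≤ ggcd b j n :=
    le_csSup (bddAbove_ggcd_set hb hj)
      ⟨hl, Nat.pow_lcm_pow ▸ Nat.lcm_dvd hmj hgj, Nat.pow_lcm_pow ▸ Nat.lcm_dvd hmn hgn⟩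
  rw [← le_antisymm hle (Nat.le_of_dvd hl (Nat.dvd_lcm_right _ _))]
  exact Nat.dvd_lcm_left _ _

lemma log_ggcd_eq_sum_vonMangoldt (hb : b ≠ 0) (hj : j ≠ 0) (hn : n ≠ 0) {N : ℕ} (hnN : n ≤ N) :
    Real.log (ggcd b j n) = ∑ m ∈ Icc 1 N, if m ^ b ∣ j ∧ m ^ b ∣ n then Λ m else 0 := by
  obtain ⟨hg, -, hgn⟩ := ggcd_spec (n := n) hb hj
  have hdivisors : {m ∈ Icc 1 N | m ^ b ∣ j ∧ m ^ b ∣ n} = (ggcd b j n).divisors := by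
    ext m
    simp only [mem_filter, mem_Icc, Nat.mem_divisors, ← dvd_ggcd_iff hb hj]
    refine ⟨fun h => ⟨h.2, hg.ne'⟩, fun ⟨hm, _⟩ => ⟨⟨Nat.pos_of_dvd_of_pos hm hg, ?_⟩, hm⟩⟩
    calc m ≤ ggcd b j n := Nat.le_of_dvd hg hm
      _ ≤ ggcd b j n ^ b := Nat.le_self_pow hb _
      _ ≤ N := (Nat.le_of_dvd (by omega) hgn).trans hnN
  rw [← sum_filter, hdivisors, vonMangoldt_sum]

noncomputable def triangular (K : ℕ) : ℝ := K * (K + 1) / 2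

lemma triangular_zero : triangular 0 = 0 := by simp [triangular]

lemma triangular_succ (K : ℕ) : triangular (K + 1) = triangular K + (K + 1) := by
  simp only [triangular]; push_cast; ring

lemma abs_triangular_floor_sub_le {y : ℝ} (hy : 0 ≤ y) : |triangular ⌊y⌋₊ - y ^ 2 / 2| ≤ y := by
  have h1 : (⌊y⌋₊ : ℝ) ≤ y := Nat.floor_le hy
  have h2 : y < ⌊y⌋₊ + 1 := Nat.lt_floor_add_one y
  rw [triangular, abs_le]
  constructor <;> nlinarith

lemma sum_Icc_sum_Icc_ite_dvd (q N : ℕ) (c : ℝ) :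
    ∑ n ∈ Icc 1 N, ∑ j ∈ Icc 1 n, (if q ∣ j ∧ q ∣ n then c else 0) = c * triangular (N / q) := by
  induction N with
  | zero => simp [triangular_zero]
  | succ N ih =>
    have hcount : ∑ j ∈ Icc 1 (N + 1), (if q ∣ j then c else 0) = c * ((N + 1) / q : ℕ) := by
      rw [← sum_filter, sum_const, ← Nat.Ioc_filter_dvd_card_eq_div, nsmul_eq_mul, mul_comm]
      rfl
    rw [sum_Icc_succ_top (by omega), ih, Nat.succ_div]
    by_cases hq : q ∣ N + 1
    · simp only [hq, and_true, if_true, hcount, triangular_succ, Nat.succ_div]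
      push_cast; ring
    · simp [hq]

lemma sum_sum_log_ggcd_eq (hb : b ≠ 0) (N : ℕ) :
    ∑ n ∈ Icc 1 N, ∑ j ∈ Icc 1 n, Real.log (ggcd b j n) =
      ∑ m ∈ Icc 1 N, Λ m * triangular (N / m ^ b) := by
  calc ∑ n ∈ Icc 1 N, ∑ j ∈ Icc 1 n, Real.log (ggcd b j n)
      = ∑ n ∈ Icc 1 N, ∑ j ∈ Icc 1 n, ∑ m ∈ Icc 1 N,
          if m ^ b ∣ j ∧ m ^ b ∣ n then Λ m else 0 := by
        refine sum_congr rfl fun n hn => sum_congr rfl fun j hj => ?_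
        rw [mem_Icc] at hn hj
        exact log_ggcd_eq_sum_vonMangoldt hb (by omega) (by omega) hn.2
    _ = ∑ n ∈ Icc 1 N, ∑ m ∈ Icc 1 N, ∑ j ∈ Icc 1 n,
          if m ^ b ∣ j ∧ m ^ b ∣ n then Λ m else 0 := sum_congr rfl fun _ _ => sum_comm
    _ = ∑ m ∈ Icc 1 N, ∑ n ∈ Icc 1 N, ∑ j ∈ Icc 1 n,
          if m ^ b ∣ j ∧ m ^ b ∣ n then Λ m else 0 := sum_comm
    _ = ∑ m ∈ Icc 1 N, Λ m * triangular (N / m ^ b) :=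
        sum_congr rfl fun m _ => sum_Icc_sum_Icc_ite_dvd _ _ _

lemma hasSum_vonMangoldt_mul_triangular (hb : b ≠ 0) (N : ℕ) :
    HasSum (fun m => Λ m * triangular (N / m ^ b))
      (∑ n ∈ Icc 1 N, ∑ j ∈ Icc 1 n, Real.log (ggcd b j n)) := by
  rw [sum_sum_log_ggcd_eq hb]
  refine hasSum_sum_of_ne_finset_zero fun m hm => ?_
  rcases Nat.eq_zero_or_pos m with rfl | hm0
  · simp
  have hNm : N < m ^ b := by
    simp only [mem_Icc, not_and, not_le] at hm
    exact (hm hm0).trans_le (Nat.le_self_pow hb m)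
  rw [Nat.div_eq_of_lt hNm, triangular_zero, mul_zero]

lemma LSeries_term_vonMangoldt_natCast (k m : ℕ) :
    LSeries.term (fun n => (Λ n : ℂ)) k m = ((Λ m / (m : ℝ) ^ k : ℝ) : ℂ) := by
  rcases eq_or_ne m 0 with rfl | hm
  · simp
  · rw [LSeries.term_of_ne_zero hm, Complex.cpow_natCast]
    push_cast
    rfl

lemma summable_vonMangoldt_div_pow {k : ℕ} (hk : 1 < k) :
    Summable (fun m : ℕ => Λ m / (m : ℝ) ^ k) := by
  rw [← Complex.summable_ofReal]
  refine (LSeriesSummable_vonMangoldt (s := k) (by simpa using hk)).congr fun m => ?_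
  exact LSeries_term_vonMangoldt_natCast k m

lemma ofReal_tsum_vonMangoldt_div_pow {k : ℕ} (hk : 1 < k) :
    ((∑' m : ℕ, Λ m / (m : ℝ) ^ k : ℝ) : ℂ) = -deriv riemannZeta k / riemannZeta k := by
  rw [← LSeries_vonMangoldt_eq_deriv_riemannZeta_div (by simpa using hk), LSeries,
    Complex.ofReal_tsum]
  exact tsum_congr fun m => (LSeries_term_vonMangoldt_natCast k m).symm

lemma abs_sum_sum_log_ggcd_sub_le (hb : 1 < b) {x : ℝ} (hx : 0 ≤ x) :
    |∑ n ∈ Icc 1 ⌊x⌋₊, ∑ j ∈ Icc 1 n, Real.log (ggcd b j n)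
        - (∑' m : ℕ, Λ m / (m : ℝ) ^ (2 * b)) / 2 * x ^ 2|
      ≤ (∑' m : ℕ, Λ m / (m : ℝ) ^ b) * x := by
  have hmain := hasSum_vonMangoldt_mul_triangular (by omega : b ≠ 0) ⌊x⌋₊
  have hsquare : HasSum (fun m : ℕ => Λ m * ((x / (m : ℝ) ^ b) ^ 2 / 2))
      (x ^ 2 / 2 * ∑' m : ℕ, Λ m / (m : ℝ) ^ (2 * b)) := by
    refine ((summable_vonMangoldt_div_pow (by omega : 1 < 2 * b)).hasSum.mul_left
      (x ^ 2 / 2)).congr_fun fun m => ?_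
    rw [div_pow, ← pow_mul, mul_comm b 2]
    ring
  have hlinear := (summable_vonMangoldt_div_pow hb).hasSum.mul_right x
  rw [div_mul_comm]
  refine (hmain.sub hsquare).norm_le_of_bounded hlinear fun m => ?_
  rw [Real.norm_eq_abs, ← mul_sub, abs_mul, abs_of_nonneg vonMangoldt_nonneg, div_mul_eq_mul_div,
    mul_div_assoc, ← Nat.cast_pow, ← Nat.floor_div_natCast]
  exact mul_le_mul_of_nonneg_left (abs_triangular_floor_sub_le (by positivity)) vonMangoldt_nonneg

end

theorem sum_log_ggcd_asymptotic (b : ℕ) (hb : 2 ≤ b) :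
    (fun x : ℝ =>
        (∑ n ∈ Finset.Icc 1 ⌊x⌋₊, ∑ j ∈ Finset.Icc 1 n,
          (Real.log (ggcd b j n) : ℂ)) -
        (-(deriv riemannZeta (2 * b) / (2 * riemannZeta (2 * b)))) * (x : ℂ) ^ 2)
      =O[Filter.atTop] (fun x : ℝ => x) := by
  have hconst : -(deriv riemannZeta (2 * b) / (2 * riemannZeta (2 * b))) =
      (((∑' m : ℕ, Λ m / (m : ℝ) ^ (2 * b)) / 2 : ℝ) : ℂ) := by
    rw [Complex.ofReal_div, ofReal_tsum_vonMangoldt_div_pow (by omega)]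
    push_cast
    ring
  refine Asymptotics.IsBigO.of_bound (∑' m : ℕ, Λ m / (m : ℝ) ^ b) ?_
  filter_upwards [Filter.eventually_ge_atTop 0] with x hx
  simp only [hconst, Real.norm_of_nonneg hx, ← Complex.ofReal_pow, ← Complex.ofReal_mul,
    ← Complex.ofReal_sum, ← Complex.ofReal_sub, Complex.norm_real, Real.norm_eq_abs]
  exact abs_sum_sum_log_ggcd_sub_le (by omega) hx
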